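/- In a directed graph on a finite vertex set where every vertex has exactly one outgoing edge and exactly one incoming edge (a permutation), if there exists a function T from vertices to integers such that for every edge (u,v) with u ≠ d and v ≠ d (where d is a fixed depot vertex) we have T(v) ≥ T(u) + 1, then the graph consists of a single directed cycle through d (i.e., the permutation is a single cycle containing d). -/

import Mathlib

/-!
If some vertex `v` were not on the cycle of `d`, then no iterate of `v` would be `d`, so the
rank would increase by at least one along every step of the orbit of `v`. That orbit returns
to `v` after `orderOf σ ≥ 1` steps, forcing `T v < T v`.
-/

namespace Equiv.Perm

/-- The Miller–Tucker–Zemlin inequalities for the tour `σ` with depot `d` and rank `T`. -/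
def IsMTZRank {α : Type*} (σ : Perm α) (d : α) (T : α → ℤ) : Prop :=
  ∀ u, u ≠ d → σ u ≠ d → T (σ u) ≥ T u + 1

variable {α : Type*} {σ : Perm α} {d : α} {T : α → ℤ}

theorem IsMTZRank.add_le_pow_apply (hT : IsMTZRank σ d T) {x : α} (hx : ¬ SameCycle σ x d)
    (m : ℕ) : T x + m ≤ T ((σ ^ m) x) := by
  have avoids_depot : ∀ k : ℕ, (σ ^ k) x ≠ d := fun k hk =>
    hx ⟨k, by simpa using hk⟩
  induction m with
  | zero => simp
  | succ m ih =>
    have step := hT _ (avoids_depot m) (by simpa [pow_succ'] using avoids_depot (m + 1))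
    rw [pow_succ', Perm.mul_apply, Nat.cast_succ]
    linarith

theorem IsMTZRank.sameCycle [Finite α] (hT : IsMTZRank σ d T) (x : α) : SameCycle σ x d := by
  by_contra hx
  have hreturn := hT.add_le_pow_apply hx (orderOf σ)
  rw [pow_orderOf_eq_one, Perm.one_apply] at hreturn
  have := orderOf_pos σ
  omega

end Equiv.Perm

theorem mtz_single_cycle_general {V : Type*} [Fintype V]
    (σ : Equiv.Perm V) (d : V) (T : V → ℤ)
    (hT : ∀ u : V, u ≠ d → σ u ≠ d → T (σ u) ≥ T u + 1) :
    ∀ v : V, ∃ k : ℕ, (σ ^ k) d = v :=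
  fun v => (Equiv.Perm.IsMTZRank.sameCycle hT v).symm.exists_nat_pow_eq

/-- MTZ correctness: if a permutation σ of a finite nonempty vertex set admits a rank
function `T : V → ℤ` with `T (σ u) ≥ T u + 1` for every edge `(u, σ u)` avoiding the
depot `d`, then the orbit of `d` under `σ` is all of `V` (single cycle through `d`). -/
theorem mtz_single_cycle {V : Type*} [Fintype V] [Nonempty V]
    (σ : Equiv.Perm V) (d : V) (T : V → ℤ)
    (hT : ∀ u : V, u ≠ d → σ u ≠ d → T (σ u) ≥ T u + 1) :
    ∀ v : V, ∃ k : ℕ, (σ ^ k) d = v :=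
  mtz_single_cycle_general σ d T hT
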